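/- arXiv:1710.08787 — 4 statements merged into one kernel-verified Lean document; each statement's English description precedes it below -/
import Mathlib

section
/- Suppose the interface Dirichlet data and fluxes of the two boxes coincide, i.e. v₁ = T^α₁₁ u₁ + T^α₁₃ u₃, v₃ = T^α₃₁ u₁ + T^α₃₃ u₃, v₂ = T^β₂₂ u₂ + T^β₂₃ u₃, and v₃ = T^β₃₂ u₂ + T^β₃₃ u₃, and that T^α₃₃ − T^β₃₃ is invertible. Set w := (T^α₃₃ − T^β₃₃)⁻¹ (−T^α₃₁ u₁ + T^β₃₂ u₂). Then the exterior fluxes are given by the merged Dirichlet-to-Neumann map: v₁ = T^α₁₁ u₁ + T^α₁₃ w and v₂ = T^β₂₂ u₂ + T^β₂₃ w; equivalently, the stacked vector (v₁, v₂) equals T^τ applied to (u₁, u₂), where T^τ is the block matrix [[T^α₁₁, 0], [0, T^β₂₂]] + [[T^α₁₃], [T^β₂₃]] · (T^α₃₃ − T^β₃₃)⁻¹ · [−T^α₃₁ | T^β₃₂]. -/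
/-!
Equating the two expressions for the interface flux `v₃` gives the linear system
`(Tα₃₃ - Tβ₃₃) u₃ = -Tα₃₁ u₁ + Tβ₃₂ u₂`, so invertibility forces `w = u₃`. Substituting
`u₃` into the exterior flux equations of the two boxes yields both the componentwise formulas
and, read blockwise, the merged map `T^τ`.
-/

open Matrix

section DtNMerge

variable {R : Type*}

lemma sub_mulVec_eq_of_add_mulVec_eq [CommRing R] {l₁ l₂ n : Type*} [Fintype l₁] [Fintype l₂]
    [Fintype n] {A : Matrix n l₁ R} {B : Matrix n l₂ R} {P Q : Matrix n n R}
    {x : l₁ → R} {y : l₂ → R} {z : n → R}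
    (h : A *ᵥ x + P *ᵥ z = B *ᵥ y + Q *ᵥ z) :
    (P - Q) *ᵥ z = -(A *ᵥ x) + B *ᵥ y := by
  rw [sub_mulVec]
  linear_combination (norm := module) h

lemma eq_nonsing_inv_mulVec_of_mulVec_eq [CommRing R] {n : Type*} [Fintype n] [DecidableEq n]
    {A : Matrix n n R} (hA : IsUnit A) {x y : n → R} (h : A *ᵥ x = y) : x = A⁻¹ *ᵥ y :=
  letI := hA.invertible
  (inv_mulVec_eq_vec h.symm).symm

lemma fromBlocks_add_fromRows_mul_fromCols_mulVec_sumElim [Semiring R]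
    {m₁ m₂ n₁ n₂ k l : Type*} [Fintype n₁] [Fintype n₂] [Fintype k] [Fintype l]
    (A : Matrix m₁ n₁ R) (D : Matrix m₂ n₂ R) (B : Matrix m₁ k R) (E : Matrix m₂ k R)
    (S : Matrix k l R) (F : Matrix l n₁ R) (G : Matrix l n₂ R) (x : n₁ → R) (y : n₂ → R) :
    (fromBlocks A 0 0 D + fromRows B E * S * fromCols F G) *ᵥ Sum.elim x y =
      Sum.elim (A *ᵥ x + B *ᵥ (S *ᵥ (F *ᵥ x + G *ᵥ y)))
        (D *ᵥ y + E *ᵥ (S *ᵥ (F *ᵥ x + G *ᵥ y))) := by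
  rw [add_mulVec, fromBlocks_mulVec, ← mulVec_mulVec, ← mulVec_mulVec,
    fromCols_mulVec_sumElim, fromRows_mulVec]
  ext (i | i) <;> simp

end DtNMerge

/-- Merge of two Dirichlet-to-Neumann operators: the exterior fluxes are given
by the merged Dirichlet-to-Neumann map `T^τ`. -/
theorem hps_merge_DtN {n₁ n₂ n₃ : ℕ}
    (Tα₁₁ : Matrix (Fin n₁) (Fin n₁) ℝ) (Tα₁₃ : Matrix (Fin n₁) (Fin n₃) ℝ)
    (Tα₃₁ : Matrix (Fin n₃) (Fin n₁) ℝ) (Tα₃₃ : Matrix (Fin n₃) (Fin n₃) ℝ)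
    (Tβ₂₂ : Matrix (Fin n₂) (Fin n₂) ℝ) (Tβ₂₃ : Matrix (Fin n₂) (Fin n₃) ℝ)
    (Tβ₃₂ : Matrix (Fin n₃) (Fin n₂) ℝ) (Tβ₃₃ : Matrix (Fin n₃) (Fin n₃) ℝ)
    (u₁ v₁ : Fin n₁ → ℝ) (u₂ v₂ : Fin n₂ → ℝ) (u₃ v₃ : Fin n₃ → ℝ)
    (hα₁ : v₁ = Tα₁₁.mulVec u₁ + Tα₁₃.mulVec u₃)
    (hα₃ : v₃ = Tα₃₁.mulVec u₁ + Tα₃₃.mulVec u₃)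
    (hβ₂ : v₂ = Tβ₂₂.mulVec u₂ + Tβ₂₃.mulVec u₃)
    (hβ₃ : v₃ = Tβ₃₂.mulVec u₂ + Tβ₃₃.mulVec u₃)
    (hinv : IsUnit (Tα₃₃ - Tβ₃₃))
    (w : Fin n₃ → ℝ)
    (hw : w = (Tα₃₃ - Tβ₃₃)⁻¹.mulVec (-(Tα₃₁.mulVec u₁) + Tβ₃₂.mulVec u₂)) :
    v₁ = Tα₁₁.mulVec u₁ + Tα₁₃.mulVec w ∧
    v₂ = Tβ₂₂.mulVec u₂ + Tβ₂₃.mulVec w ∧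
    Sum.elim v₁ v₂ =
      (Matrix.fromBlocks Tα₁₁ 0 0 Tβ₂₂ +
        Matrix.fromRows Tα₁₃ Tβ₂₃ * (Tα₃₃ - Tβ₃₃)⁻¹ *
          Matrix.fromCols (-Tα₃₁) Tβ₃₂).mulVec (Sum.elim u₁ u₂) := by
  have hu₃ : u₃ = w :=
    hw ▸ eq_nonsing_inv_mulVec_of_mulVec_eq hinv
      (sub_mulVec_eq_of_add_mulVec_eq (hα₃.symm.trans hβ₃))
  subst hu₃
  refine ⟨hα₁, hβ₂, ?_⟩
  rw [fromBlocks_add_fromRows_mul_fromCols_mulVec_sumElim, neg_mulVec, ← hw, hα₁, hβ₂]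
end

section
/- Suppose v₁ = T^α₁₁ u₁ + T^α₁₃ u₃ and v₃ = T^α₃₁ u₁ + T^α₃₃ u₃ on the coarse side, v₂ = T^β₂₂ u₂ + T^β₂₃ (L₁ₜ₂ u₃) on the fine side, the flux-matching condition v₃ = L₂ₜ₁ (T^β₃₂ u₂ + T^β₃₃ L₁ₜ₂ u₃) holds, and T^α₃₃ − L₂ₜ₁ T^β₃₃ L₁ₜ₂ is invertible. Set w := (T^α₃₃ − L₂ₜ₁ T^β₃₃ L₁ₜ₂)⁻¹ (−T^α₃₁ u₁ + L₂ₜ₁ T^β₃₂ u₂). Then v₁ = T^α₁₁ u₁ + T^α₁₃ w and v₂ = T^β₂₂ u₂ + T^β₂₃ L₁ₜ₂ w; equivalently, (v₁, v₂) equals the merged map [[T^α₁₁, 0], [0, T^β₂₂]] + [[T^α₁₃], [T^β₂₃ L₁ₜ₂]] · (T^α₃₃ − L₂ₜ₁ T^β₃₃ L₁ₜ₂)⁻¹ · [−T^α₃₁ | L₂ₜ₁ T^β₃₂] applied to (u₁, u₂). -/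
/-!
Equating the coarse and the interpolated fine expressions for the interface flux `v₃` gives the
Schur-complement system `(Tα₃₃ - L₂ₜ₁ Tβ₃₃ L₁ₜ₂) u₃ = -Tα₃₁ u₁ + L₂ₜ₁ Tβ₃₂ u₂`. When the Schur
complement is invertible, `w` is therefore the interface data `u₃` itself, and substituting it into
the exterior flux equations of the two boxes is exactly the block formula for the merged map.
-/

namespace Matrix

theorem interfaceSchur_mulVec_eq_of_flux_eq {R ι₁ ι₂ ι₃ κ₃ : Type*} [CommRing R]
    [Fintype ι₁] [Fintype ι₂] [Fintype ι₃] [Fintype κ₃]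
    (Tα₃₁ : Matrix ι₃ ι₁ R) (Tα₃₃ : Matrix ι₃ ι₃ R) (Tβ₃₂ : Matrix κ₃ ι₂ R)
    (Tβ₃₃ : Matrix κ₃ κ₃ R) (L₂ₜ₁ : Matrix ι₃ κ₃ R) (L₁ₜ₂ : Matrix κ₃ ι₃ R)
    (u₁ : ι₁ → R) (u₂ : ι₂ → R) (u₃ : ι₃ → R)
    (h : Tα₃₁ *ᵥ u₁ + Tα₃₃ *ᵥ u₃ = L₂ₜ₁ *ᵥ (Tβ₃₂ *ᵥ u₂ + Tβ₃₃ *ᵥ (L₁ₜ₂ *ᵥ u₃))) :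
    (Tα₃₃ - L₂ₜ₁ * Tβ₃₃ * L₁ₜ₂) *ᵥ u₃ = -(Tα₃₁ *ᵥ u₁) + (L₂ₜ₁ * Tβ₃₂) *ᵥ u₂ := by
  rw [mulVec_add] at h
  simp only [sub_mulVec, ← mulVec_mulVec]
  linear_combination h

theorem fromBlocks_add_fromRows_mul_mul_fromCols_mulVec_sumElim {R m₁ m₂ n₁ n₂ k l : Type*}
    [CommSemiring R] [Fintype n₁] [Fintype n₂] [Fintype k] [Fintype l]
    (P : Matrix m₁ n₁ R) (Q : Matrix m₂ n₂ R) (B : Matrix m₁ k R) (C : Matrix m₂ k R)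
    (S : Matrix k l R) (E : Matrix l n₁ R) (F : Matrix l n₂ R) (x : n₁ → R) (y : n₂ → R) :
    (fromBlocks P 0 0 Q + fromRows B C * S * fromCols E F) *ᵥ Sum.elim x y =
      Sum.elim (P *ᵥ x + B *ᵥ (S *ᵥ (E *ᵥ x + F *ᵥ y)))
        (Q *ᵥ y + C *ᵥ (S *ᵥ (E *ᵥ x + F *ᵥ y))) := by
  rw [add_mulVec, fromBlocks_mulVec, ← mulVec_mulVec, fromCols_mulVec_sumElim, ← mulVec_mulVec,
    fromRows_mulVec]
  simp only [Sum.elim_comp_inl, Sum.elim_comp_inr, zero_mulVec, add_zero, zero_add,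
    Sum.elim_add_add]

end Matrix

/-- Merge of a coarse box with a finer box via interpolation: the exterior
fluxes are given by the merged Dirichlet-to-Neumann map. -/
theorem hps_merge_DtN_interp {n₁ n₂ n₃ m₃ : ℕ}
    (Tα₁₁ : Matrix (Fin n₁) (Fin n₁) ℝ) (Tα₁₃ : Matrix (Fin n₁) (Fin n₃) ℝ)
    (Tα₃₁ : Matrix (Fin n₃) (Fin n₁) ℝ) (Tα₃₃ : Matrix (Fin n₃) (Fin n₃) ℝ)
    (Tβ₂₂ : Matrix (Fin n₂) (Fin n₂) ℝ) (Tβ₂₃ : Matrix (Fin n₂) (Fin m₃) ℝ)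
    (Tβ₃₂ : Matrix (Fin m₃) (Fin n₂) ℝ) (Tβ₃₃ : Matrix (Fin m₃) (Fin m₃) ℝ)
    (L₂ₜ₁ : Matrix (Fin n₃) (Fin m₃) ℝ) (L₁ₜ₂ : Matrix (Fin m₃) (Fin n₃) ℝ)
    (u₁ v₁ : Fin n₁ → ℝ) (u₂ v₂ : Fin n₂ → ℝ) (u₃ v₃ : Fin n₃ → ℝ)
    (hα₁ : v₁ = Tα₁₁.mulVec u₁ + Tα₁₃.mulVec u₃)
    (hα₃ : v₃ = Tα₃₁.mulVec u₁ + Tα₃₃.mulVec u₃)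
    (hβ₂ : v₂ = Tβ₂₂.mulVec u₂ + Tβ₂₃.mulVec (L₁ₜ₂.mulVec u₃))
    (hβ₃ : v₃ = L₂ₜ₁.mulVec (Tβ₃₂.mulVec u₂ + Tβ₃₃.mulVec (L₁ₜ₂.mulVec u₃)))
    (hinv : IsUnit (Tα₃₃ - L₂ₜ₁ * Tβ₃₃ * L₁ₜ₂))
    (w : Fin n₃ → ℝ)
    (hw : w = (Tα₃₃ - L₂ₜ₁ * Tβ₃₃ * L₁ₜ₂)⁻¹.mulVec
      (-(Tα₃₁.mulVec u₁) + (L₂ₜ₁ * Tβ₃₂).mulVec u₂)) :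
    v₁ = Tα₁₁.mulVec u₁ + Tα₁₃.mulVec w ∧
    v₂ = Tβ₂₂.mulVec u₂ + (Tβ₂₃ * L₁ₜ₂).mulVec w ∧
    Sum.elim v₁ v₂ =
      (Matrix.fromBlocks Tα₁₁ 0 0 Tβ₂₂ +
        Matrix.fromRows Tα₁₃ (Tβ₂₃ * L₁ₜ₂) * (Tα₃₃ - L₂ₜ₁ * Tβ₃₃ * L₁ₜ₂)⁻¹ *
          Matrix.fromCols (-Tα₃₁) (L₂ₜ₁ * Tβ₃₂)).mulVec (Sum.elim u₁ u₂) := by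
  have hschur := Matrix.interfaceSchur_mulVec_eq_of_flux_eq Tα₃₁ Tα₃₃ Tβ₃₂ Tβ₃₃ L₂ₜ₁ L₁ₜ₂
    u₁ u₂ u₃ (hα₃.symm.trans hβ₃)
  obtain ⟨_⟩ := hinv.nonempty_invertible
  have hwu₃ : w = u₃ := hw.trans (Matrix.inv_mulVec_eq_vec hschur.symm)
  have hv₁ : v₁ = Tα₁₁.mulVec u₁ + Tα₁₃.mulVec w := hwu₃ ▸ hα₁
  have hv₂ : v₂ = Tβ₂₂.mulVec u₂ + (Tβ₂₃ * L₁ₜ₂).mulVec w := by rw [hβ₂, hwu₃, Matrix.mulVec_mulVec]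
  refine ⟨hv₁, hv₂, ?_⟩
  rw [Matrix.fromBlocks_add_fromRows_mul_mul_fromCols_mulVec_sumElim, Matrix.neg_mulVec, ← hw,
    hv₁, hv₂]
end

section
/- Assume the ItI relations g₁ = R^α₁₁ t₁ + R^α₁₃ t₃^α + h₁^α, g₃^α = R^α₃₁ t₁ + R^α₃₃ t₃^α + h₃^α, g₂ = R^β₂₂ t₂ + R^β₂₃ t₃^β + h₂^β, g₃^β = R^β₃₂ t₂ + R^β₃₃ t₃^β + h₃^β, together with the interface coupling t₃^α = −g₃^β and t₃^β = −g₃^α. If W := I − R^β₃₃ R^α₃₃ is invertible, then the incoming interface impedance data on box α is t₃^α = W⁻¹ (R^β₃₃ R^α₃₁ t₁ − R^β₃₂ t₂) + W⁻¹ (R^β₃₃ h₃^α − h₃^β). -/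
/-! Substituting the outgoing data of `β` into `t₃α = -g₃β`, then `t₃β = -g₃α` and the outgoing
data of `α`, expresses `t₃α` through itself: `t₃α = Rβ₃₃ Rα₃₃ t₃α + (known terms)`. This is the
linear system `W t₃α = …` with `W = I - Rβ₃₃ Rα₃₃`, solved by inverting `W`. -/

open Matrix

theorem iti_interface_system {R ι₁ ι₂ ι₃ : Type*} [CommRing R]
    [Fintype ι₁] [Fintype ι₂] [Fintype ι₃] [DecidableEq ι₃]
    {Rα₃₁ : Matrix ι₃ ι₁ R} {Rα₃₃ : Matrix ι₃ ι₃ R}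
    {Rβ₃₂ : Matrix ι₃ ι₂ R} {Rβ₃₃ : Matrix ι₃ ι₃ R}
    {t₁ : ι₁ → R} {t₂ : ι₂ → R} {t₃α t₃β g₃α g₃β h₃α h₃β : ι₃ → R}
    (hα₃ : g₃α = Rα₃₁ *ᵥ t₁ + Rα₃₃ *ᵥ t₃α + h₃α)
    (hβ₃ : g₃β = Rβ₃₂ *ᵥ t₂ + Rβ₃₃ *ᵥ t₃β + h₃β)
    (hcα : t₃α = -g₃β) (hcβ : t₃β = -g₃α) :
    (1 - Rβ₃₃ * Rα₃₃) *ᵥ t₃α =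
      ((Rβ₃₃ * Rα₃₁) *ᵥ t₁ - Rβ₃₂ *ᵥ t₂) + (Rβ₃₃ *ᵥ h₃α - h₃β) := by
  rw [sub_mulVec, one_mulVec]
  nth_rewrite 1 [hcα]
  rw [hβ₃, hcβ, hα₃]
  simp only [mulVec_add, mulVec_neg, ← mulVec_mulVec]
  abel

theorem iti_merge_talpha_general {n₁ n₂ n₃ : ℕ}
    (Rα₃₁ : Matrix (Fin n₃) (Fin n₁) ℂ) (Rα₃₃ : Matrix (Fin n₃) (Fin n₃) ℂ)
    (Rβ₃₂ : Matrix (Fin n₃) (Fin n₂) ℂ) (Rβ₃₃ : Matrix (Fin n₃) (Fin n₃) ℂ)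
    (t₁ : Fin n₁ → ℂ) (t₂ : Fin n₂ → ℂ)
    (t₃α t₃β g₃α g₃β h₃α h₃β : Fin n₃ → ℂ)
    (hα₃ : g₃α = Rα₃₁.mulVec t₁ + Rα₃₃.mulVec t₃α + h₃α)
    (hβ₃ : g₃β = Rβ₃₂.mulVec t₂ + Rβ₃₃.mulVec t₃β + h₃β)
    (hcα : t₃α = -g₃β) (hcβ : t₃β = -g₃α)
    (hW : IsUnit (1 - Rβ₃₃ * Rα₃₃)) :
    t₃α = (1 - Rβ₃₃ * Rα₃₃)⁻¹.mulVec
        ((Rβ₃₃ * Rα₃₁).mulVec t₁ - Rβ₃₂.mulVec t₂) +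
      (1 - Rβ₃₃ * Rα₃₃)⁻¹.mulVec (Rβ₃₃.mulVec h₃α - h₃β) := by
  let := hW.invertible
  rw [← mulVec_add]
  exact (inv_mulVec_eq_vec (iti_interface_system hα₃ hβ₃ hcα hcβ).symm).symm

/-- ItI merge: the incoming interface impedance data on box `α`. -/
theorem iti_merge_talpha {n₁ n₂ n₃ : ℕ}
    (Rα₁₁ : Matrix (Fin n₁) (Fin n₁) ℂ) (Rα₁₃ : Matrix (Fin n₁) (Fin n₃) ℂ)
    (Rα₃₁ : Matrix (Fin n₃) (Fin n₁) ℂ) (Rα₃₃ : Matrix (Fin n₃) (Fin n₃) ℂ)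
    (Rβ₂₂ : Matrix (Fin n₂) (Fin n₂) ℂ) (Rβ₂₃ : Matrix (Fin n₂) (Fin n₃) ℂ)
    (Rβ₃₂ : Matrix (Fin n₃) (Fin n₂) ℂ) (Rβ₃₃ : Matrix (Fin n₃) (Fin n₃) ℂ)
    (t₁ g₁ h₁α : Fin n₁ → ℂ) (t₂ g₂ h₂β : Fin n₂ → ℂ)
    (t₃α t₃β g₃α g₃β h₃α h₃β : Fin n₃ → ℂ)
    (hα₁ : g₁ = Rα₁₁.mulVec t₁ + Rα₁₃.mulVec t₃α + h₁α)
    (hα₃ : g₃α = Rα₃₁.mulVec t₁ + Rα₃₃.mulVec t₃α + h₃α)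
    (hβ₂ : g₂ = Rβ₂₂.mulVec t₂ + Rβ₂₃.mulVec t₃β + h₂β)
    (hβ₃ : g₃β = Rβ₃₂.mulVec t₂ + Rβ₃₃.mulVec t₃β + h₃β)
    (hcα : t₃α = -g₃β) (hcβ : t₃β = -g₃α)
    (hW : IsUnit (1 - Rβ₃₃ * Rα₃₃)) :
    t₃α = (1 - Rβ₃₃ * Rα₃₃)⁻¹.mulVec
        ((Rβ₃₃ * Rα₃₁).mulVec t₁ - Rβ₃₂.mulVec t₂) +
      (1 - Rβ₃₃ * Rα₃₃)⁻¹.mulVec (Rβ₃₃.mulVec h₃α - h₃β) :=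
  iti_merge_talpha_general Rα₃₁ Rα₃₃ Rβ₃₂ Rβ₃₃ t₁ t₂ t₃α t₃β g₃α g₃β h₃α h₃β hα₃ hβ₃ hcα hcβ hW
end

section
/- Assume the ItI relations g₁ = R^α₁₁ t₁ + R^α₁₃ t₃^α + h₁^α, g₃^α = R^α₃₁ t₁ + R^α₃₃ t₃^α + h₃^α, g₂ = R^β₂₂ t₂ + R^β₂₃ t₃^β + h₂^β, g₃^β = R^β₃₂ t₂ + R^β₃₃ t₃^β + h₃^β, together with the interface coupling t₃^α = −g₃^β and t₃^β = −g₃^α, and that W := I − R^β₃₃ R^α₃₃ is invertible. Then the incoming interface impedance data on box β is t₃^β = (−R^α₃₁ − R^α₃₃ W⁻¹ R^β₃₃ R^α₃₁) t₁ + R^α₃₃ W⁻¹ R^β₃₂ t₂ − (I + R^α₃₃ W⁻¹ R^β₃₃) h₃^α + R^α₃₃ W⁻¹ h₃^β. -/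
/-- ItI merge: the incoming interface impedance data on box `β`. -/
theorem iti_merge_tbeta {n₁ n₂ n₃ : ℕ}
    (Rα₁₁ : Matrix (Fin n₁) (Fin n₁) ℂ) (Rα₁₃ : Matrix (Fin n₁) (Fin n₃) ℂ)
    (Rα₃₁ : Matrix (Fin n₃) (Fin n₁) ℂ) (Rα₃₃ : Matrix (Fin n₃) (Fin n₃) ℂ)
    (Rβ₂₂ : Matrix (Fin n₂) (Fin n₂) ℂ) (Rβ₂₃ : Matrix (Fin n₂) (Fin n₃) ℂ)
    (Rβ₃₂ : Matrix (Fin n₃) (Fin n₂) ℂ) (Rβ₃₃ : Matrix (Fin n₃) (Fin n₃) ℂ)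
    (t₁ g₁ h₁α : Fin n₁ → ℂ) (t₂ g₂ h₂β : Fin n₂ → ℂ)
    (t₃α t₃β g₃α g₃β h₃α h₃β : Fin n₃ → ℂ)
    (hα₁ : g₁ = Rα₁₁.mulVec t₁ + Rα₁₃.mulVec t₃α + h₁α)
    (hα₃ : g₃α = Rα₃₁.mulVec t₁ + Rα₃₃.mulVec t₃α + h₃α)
    (hβ₂ : g₂ = Rβ₂₂.mulVec t₂ + Rβ₂₃.mulVec t₃β + h₂β)
    (hβ₃ : g₃β = Rβ₃₂.mulVec t₂ + Rβ₃₃.mulVec t₃β + h₃β)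
    (hcα : t₃α = -g₃β) (hcβ : t₃β = -g₃α)
    (hW : IsUnit (1 - Rβ₃₃ * Rα₃₃)) :
    t₃β = (-Rα₃₁ - Rα₃₃ * (1 - Rβ₃₃ * Rα₃₃)⁻¹ * Rβ₃₃ * Rα₃₁).mulVec t₁ +
        (Rα₃₃ * (1 - Rβ₃₃ * Rα₃₃)⁻¹ * Rβ₃₂).mulVec t₂ -
        (1 + Rα₃₃ * (1 - Rβ₃₃ * Rα₃₃)⁻¹ * Rβ₃₃).mulVec h₃α +
        (Rα₃₃ * (1 - Rβ₃₃ * Rα₃₃)⁻¹).mulVec h₃β := by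
  set A := Rα₃₃ with hA
  set B := Rβ₃₃ with hB
  have hWdet : IsUnit (1 - B * A).det := (Matrix.isUnit_iff_isUnit_det _).mp hW
  have hWW : (1 - B * A) * (1 - B * A)⁻¹ = 1 := Matrix.mul_nonsing_inv _ hWdet
  have hVdet : IsUnit (1 - A * B).det := by
    rw [Matrix.det_one_sub_mul_comm]; exact hWdet
  have hVV : (1 - A * B)⁻¹ * (1 - A * B) = 1 := Matrix.nonsing_inv_mul _ hVdet
  have hVV' : (1 - A * B) * (1 - A * B)⁻¹ = 1 := Matrix.mul_nonsing_inv _ hVdet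
  -- key : (1 - A * B) * (A * (1 - B * A)⁻¹) = A
  have key : (1 - A * B) * (A * (1 - B * A)⁻¹) = A := by
    have h1 : (1 - A * B) * A = A * (1 - B * A) := by noncomm_ring
    rw [← Matrix.mul_assoc, h1, Matrix.mul_assoc, hWW, Matrix.mul_one]
  have fact : A * (1 - B * A)⁻¹ = (1 - A * B)⁻¹ * A := by
    have := congrArg (fun X => (1 - A * B)⁻¹ * X) key
    simpa [← Matrix.mul_assoc, hVV, Matrix.one_mul] using this
  have cancel : ∀ {m : ℕ} (X : Matrix (Fin n₃) (Fin m) ℂ),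
      (1 - A * B) * ((1 - A * B)⁻¹ * X) = X := fun X => by
    rw [← Matrix.mul_assoc, hVV', Matrix.one_mul]
  -- the interface relations
  have e2 : t₃α = -(Rβ₃₂.mulVec t₂) - B.mulVec t₃β - h₃β := by
    rw [hcα, hβ₃]; abel
  have eT : t₃β = -(Rα₃₁.mulVec t₁) - A.mulVec t₃α - h₃α := by
    rw [hcβ, hα₃]; abel
  have eA : A.mulVec t₃α = -((A * Rβ₃₂).mulVec t₂) - (A * B).mulVec t₃β - A.mulVec h₃β := by
    rw [e2]
    simp only [Matrix.mulVec_sub, Matrix.mulVec_neg, ← Matrix.mulVec_mulVec]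
  -- common vector
  set v : Fin n₃ → ℂ := -(Rα₃₁.mulVec t₁) + (A * Rβ₃₂).mulVec t₂ - h₃α + A.mulVec h₃β with hv
  have hl : (1 - A * B).mulVec t₃β = v := by
    rw [Matrix.sub_mulVec, Matrix.one_mulVec]
    nth_rewrite 1 [eT]
    rw [eA, hv]
    abel
  -- the claimed right-hand side
  set rhs := (-Rα₃₁ - A * (1 - B * A)⁻¹ * B * Rα₃₁).mulVec t₁ +
      (A * (1 - B * A)⁻¹ * Rβ₃₂).mulVec t₂ -
      (1 + A * (1 - B * A)⁻¹ * B).mulVec h₃α +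
      (A * (1 - B * A)⁻¹).mulVec h₃β with hrhs
  have m1 : (1 - A * B) * (-Rα₃₁ - A * (1 - B * A)⁻¹ * B * Rα₃₁) = -Rα₃₁ := by
    rw [fact]
    simp only [Matrix.mul_sub, Matrix.mul_neg, Matrix.mul_assoc, cancel]
    simp only [Matrix.sub_mul, Matrix.one_mul, Matrix.mul_assoc]
    abel
  have m2 : (1 - A * B) * (A * (1 - B * A)⁻¹ * Rβ₃₂) = A * Rβ₃₂ := by
    rw [fact]
    simp only [Matrix.mul_assoc, cancel]
  have m3 : (1 - A * B) * (1 + A * (1 - B * A)⁻¹ * B) = 1 := by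
    rw [fact]
    simp only [Matrix.mul_add, Matrix.mul_one, Matrix.mul_assoc, cancel]
    noncomm_ring
  have m4 : (1 - A * B) * (A * (1 - B * A)⁻¹) = A := key
  have hr : (1 - A * B).mulVec rhs = v := by
    rw [hrhs]
    simp only [Matrix.mulVec_add, Matrix.mulVec_sub, Matrix.mulVec_mulVec,
      m1, m2, m3, m4, hv, Matrix.neg_mulVec, Matrix.one_mulVec]
  have hfin : t₃β = rhs := by
    have h := congrArg (Matrix.mulVec (1 - A * B)⁻¹) (hl.trans hr.symm)
    simpa [Matrix.mulVec_mulVec, hVV, Matrix.one_mulVec] using h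
  exact hfin
end
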